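/- arXiv:1603.07799 — 2 statements merged into one kernel-verified Lean document; each statement's English description precedes it below -/
import Mathlib

section
/- Let λ be a nonzero real number and let a_k(N;λ) be the recursively defined coefficients. Then for every integer N ≥ 1 one has the closed form a_1(N+1;λ) = −λ · Σ_{i=0}^{N} (N+2λ)_i · (N+λ−i−1)_{N−i−1}, where (x)_n denotes the falling factorial and by convention (x)_{−1} · term for i = N is interpreted via a_0(0;λ) = 1/λ, i.e. the i = N summand equals (N+2λ)_N · (1/λ). -/
/-!
Expanding the recursion once at `i = 2` gives
`a₁(N+2) = -λ a₀(N+1) + (N+1+2λ) a₁(N+1)`, and the convolution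
`S(N) = Σ_{i ≤ N} (N+2λ)_i a₀(N-i)` satisfies the same recursion
`S(N+1) = a₀(N+1) + (N+1+2λ) S(N)`, because `(y+1)_{i+1} = (y+1) (y)_i`.
Since `a₁(1) = -1 = -λ a₀(0)`, induction gives `a₁(N+1) = -λ S(N)`; finally
`a₀(m+1) = (m+λ)_m` turns `S(N)` into the stated sum.
-/

open Finset Polynomial

section descPochhammer

variable {R : Type*} [CommRing R]

theorem descPochhammer_eval_succ_left (n : ℕ) (x : R) :
    (descPochhammer R (n + 1)).eval x = x * (descPochhammer R n).eval (x - 1) := by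
  simp [descPochhammer_succ_left, eval_comp]

theorem sum_descPochhammer_eval_mul_succ (x : R) (g : ℕ → R) (N : ℕ) :
    ∑ i ∈ range (N + 2), (descPochhammer R i).eval (((N + 1 : ℕ) : R) + x) * g (N + 1 - i) =
      g (N + 1) + (((N + 1 : ℕ) : R) + x) *
        ∑ i ∈ range (N + 1), (descPochhammer R i).eval ((N : R) + x) * g (N - i) := by
  rw [sum_range_succ', mul_sum, add_comm]
  congr 1
  · simp
  · refine sum_congr rfl fun i _ => ?_
    rw [descPochhammer_eval_succ_left, Nat.add_sub_add_right]
    push_cast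
    ring_nf

theorem eq_descPochhammer_eval_of_succ_eq_mul (u : ℕ → R) (c : R) (h₁ : u 1 = 1)
    (hrec : ∀ N : ℕ, 1 ≤ N → u (N + 1) = ((N : R) + c) * u N) (m : ℕ) :
    u (m + 1) = (descPochhammer R m).eval ((m : R) + c) := by
  induction m with
  | zero => simpa using h₁
  | succ m ih =>
    rw [hrec (m + 1) (by omega), ih, descPochhammer_eval_succ_left]
    push_cast
    ring_nf

end descPochhammer

theorem boole_coeff_a1_closed_form_general (lam : ℝ) (hlam : lam ≠ 0)
    (a : ℕ → ℕ → ℝ)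
    (ha00 : a 0 0 = 1 / lam) (ha01 : a 0 1 = 1) (ha11 : a 1 1 = -1)
    (haTop : ∀ N : ℕ, 1 ≤ N → a 0 (N + 1) = ((N : ℝ) + lam) * a 0 N)
    (haMid : ∀ N : ℕ, 1 ≤ N → ∀ i : ℕ, 2 ≤ i → i ≤ N + 1 →
      a (i - 1) (N + 1) =
        -(((i : ℝ) - 1) * lam) * a (i - 2) N + ((N : ℝ) + (i : ℝ) * lam) * a (i - 1) N)
    (N : ℕ) :
    a 1 (N + 1) =
      -lam *
        ∑ i ∈ Finset.range (N + 1),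
          (descPochhammer ℝ i).eval ((N : ℝ) + 2 * lam) *
            (if i = N then 1 / lam
             else (descPochhammer ℝ (N - i - 1)).eval ((N : ℝ) + lam - (i : ℝ) - 1)) := by
  have ha1 : ∀ N : ℕ, a 1 (N + 1) =
      -lam * ∑ i ∈ range (N + 1),
        (descPochhammer ℝ i).eval ((N : ℝ) + 2 * lam) * a 0 (N - i) := by
    intro N
    induction N with
    | zero => simp [ha11, ha00, hlam]
    | succ N ih =>
      have hstep : a 1 (N + 2) = -lam * a 0 (N + 1) + ((N + 1 : ℝ) + 2 * lam) * a 1 (N + 1) := by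
        have h := haMid (N + 1) (by omega) 2 le_rfl (by omega)
        norm_num at h
        linarith
      rw [hstep, ih, sum_descPochhammer_eval_mul_succ]
      push_cast
      ring
  have ha0 := eq_descPochhammer_eval_of_succ_eq_mul (a 0) lam ha01 haTop
  rw [ha1]
  congr 1
  refine sum_congr rfl fun i hi => ?_
  congr 1
  split_ifs with hiN
  · simp [hiN, ha00]
  · obtain ⟨m, hm⟩ : ∃ m, N - i = m + 1 := ⟨N - i - 1, by have := mem_range.mp hi; omega⟩
    have hmN : (m : ℝ) + 1 + i = N := by exact_mod_cast (by omega : m + 1 + i = N)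
    rw [hm, ha0, Nat.add_sub_cancel]
    congr 1
    linarith

/-- For `λ ≠ 0` and the recursively defined coefficients
`a_k(N;λ)`, for every `N ≥ 1` one has the closed form
`a_1(N+1;λ) = -λ · Σ_{i=0}^{N} (N+2λ)_i · (N+λ-i-1)_{N-i-1}`,
where `(x)_n` is the falling factorial (`descPochhammer`) and the `i = N`
summand is interpreted via `a_0(0;λ) = 1/λ`, i.e. it equals `(N+2λ)_N · (1/λ)`. -/
theorem boole_coeff_a1_closed_form (lam : ℝ) (hlam : lam ≠ 0)
    (a : ℕ → ℕ → ℝ)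
    (ha00 : a 0 0 = 1 / lam) (ha01 : a 0 1 = 1) (ha11 : a 1 1 = -1)
    (haTop : ∀ N : ℕ, 1 ≤ N → a 0 (N + 1) = ((N : ℝ) + lam) * a 0 N)
    (haBot : ∀ N : ℕ, 1 ≤ N →
      a (N + 1) (N + 1) = -(((N : ℝ) + 1) * lam) * a N N)
    (haMid : ∀ N : ℕ, 1 ≤ N → ∀ i : ℕ, 2 ≤ i → i ≤ N + 1 →
      a (i - 1) (N + 1) =
        -(((i : ℝ) - 1) * lam) * a (i - 2) N + ((N : ℝ) + (i : ℝ) * lam) * a (i - 1) N)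
    (N : ℕ) (hN : 1 ≤ N) :
    a 1 (N + 1) =
      -lam *
        ∑ i ∈ Finset.range (N + 1),
          (descPochhammer ℝ i).eval ((N : ℝ) + 2 * lam) *
            (if i = N then 1 / lam
             else (descPochhammer ℝ (N - i - 1)).eval ((N : ℝ) + lam - (i : ℝ) - 1)) :=
  boole_coeff_a1_closed_form_general lam hlam a ha00 ha01 ha11 haTop haMid N
end

section
/- Let λ be a nonzero real number, let E_n be the Euler numbers, E_n^{(i)} the higher-order Euler numbers, S₁(n,k) the signed Stirling numbers of the first kind, and a_k(N;λ) the recursively defined coefficients. Then for every integer N ≥ 1 and every integer k ≥ 0 one has (1/2)·Σ_{n=0}^{k+N} E_n·λ^n·S₁(k+N,n) = (−1)^N·λ·Σ_{i=1}^{N+1} a_{i−1}(N;λ)·Σ_{l=0}^{k} C(k,l)·(−1)^l·(N+l−1)_l·Σ_{n=0}^{k−l} 2^{−i}·E_n^{(i)}·λ^n·S₁(k−l,n), where C(k,l) is the binomial coefficient and (N+l−1)_l = (N+l−1)(N+l−2)···N is the falling factorial of length l. -/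
/-!
Let `q(t) = 1 / ((1 + t)^λ + 1)`, so that `2q(t) = G(λ log (1 + t))` with `G(s) = 2 / (eˢ + 1)`.
For smooth `F`, the `m`-th derivative of `F(λ log (1 + t))` is
`(1 + t)^(-m) Σₙ S₁(m, n) λⁿ F⁽ⁿ⁾(λ log (1 + t))`: differentiating once more multiplies the
coefficient polynomial by `X - m`, exactly as `(x)_{m+1} = (x)_m (x - m)`. At `t = 0` this turns
`(1/2) Σₙ Eₙ λⁿ S₁(k + N, n)` into `q⁽ᵏ⁺ᴺ⁾(0)` and the inner sums of the right-hand side into the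
derivatives of `qⁱ` at `0`.

Since `q' = -λ (1 + t)⁻¹ (q - q²)`, induction on `N` gives
`q⁽ᴺ⁾ = (-1)ᴺ λ (1 + t)^(-N) Σⱼ aⱼ(N; λ) q^(j+1)`; the recursion defining `a` is precisely what
one more differentiation produces. Differentiating `k` more times by Leibniz's rule, with
`((1 + t)^(-N))⁽ˡ⁾(0) = (-1)ˡ (N + l - 1)_l`, yields the identity.
-/

open Polynomial Finset
open scoped ContDiff

theorem eqOn_iteratedDeriv_of_hasDerivAt {𝕜 F : Type*} [NontriviallyNormedField 𝕜]
    [NormedAddCommGroup F] [NormedSpace 𝕜 F] {f : 𝕜 → F} {Φ : ℕ → 𝕜 → F} {U : Set 𝕜}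
    (hU : IsOpen U) {n₀ : ℕ} (h₀ : Set.EqOn (iteratedDeriv n₀ f) (Φ n₀) U)
    (hΦ : ∀ m ≥ n₀, ∀ t ∈ U, HasDerivAt (Φ m) (Φ (m + 1) t) t) :
    ∀ m ≥ n₀, Set.EqOn (iteratedDeriv m f) (Φ m) U := by
  intro m hm
  induction m, hm using Nat.le_induction with
  | base => exact h₀
  | succ m hm ih =>
    intro t ht
    rw [iteratedDeriv_succ, (ih.eventuallyEq_of_mem (hU.mem_nhds ht)).deriv_eq,
      (hΦ m hm t ht).deriv]

theorem sum_coeff_mul_X_sub_C {R : Type*} [CommRing R] {p : R[X]} {d : ℕ}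
    (hp : p.natDegree ≤ d) (a : R) (ψ : ℕ → R) :
    ∑ n ∈ range (d + 2), (p * (X - C a)).coeff n * ψ n =
      ∑ n ∈ range (d + 1), p.coeff n * (ψ (n + 1) - a * ψ n) := by
  have htop : p.coeff (d + 1) = 0 := coeff_eq_zero_of_natDegree_lt (by omega)
  simp only [mul_sub, coeff_sub, coeff_mul_C, sub_mul, sum_sub_distrib]
  rw [sum_range_succ' _ (d + 1), sum_range_succ _ (d + 1)]
  simp [coeff_mul_X, htop, mul_assoc, mul_left_comm]

theorem Polynomial.coeff_eq_of_eval_eq_sum {K : Type*} [Field K] [Infinite K] {p : K[X]} {d : ℕ}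
    {c : ℕ → K} (h : ∀ x, p.eval x = ∑ k ∈ range (d + 1), c k * x ^ k) {n : ℕ} (hn : n ≤ d) :
    p.coeff n = c n := by
  have hp : p = ∑ k ∈ range (d + 1), C (c k) * X ^ k :=
    Polynomial.funext fun x => by simp [h, eval_finsetSum]
  rw [hp, finsetSum_coeff]
  simp [coeff_C_mul, coeff_X_pow, Nat.lt_succ_of_le hn]

theorem descPochhammer_eval_neg_natCast {R : Type*} [CommRing R] (N l : ℕ) :
    (descPochhammer R l).eval (-(N : R)) =
      (-1) ^ l * (descPochhammer R l).eval ((N : R) + l - 1) := by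
  rw [descPochhammer_eval_eq_ascPochhammer, ← ascPochhammer_eval_neg_eq_descPochhammer]
  ring_nf

theorem hasDerivAt_inv_one_add_pow (m : ℕ) {t : ℝ} (ht : 1 + t ≠ 0) :
    HasDerivAt (fun s : ℝ => (1 + s)⁻¹ ^ m) (-m * (1 + t)⁻¹ ^ (m + 1)) t := by
  refine ((((hasDerivAt_id' t).const_add 1).fun_inv ht).fun_pow m).congr_deriv ?_
  rcases m with _ | m
  · simp
  · simp only [Nat.add_sub_cancel, div_eq_mul_inv, ← inv_pow]
    push_cast
    ring

theorem hasDerivAt_mul_log_one_add (c : ℝ) {t : ℝ} (ht : 1 + t ≠ 0) :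
    HasDerivAt (fun s : ℝ => c * Real.log (1 + s)) (c * (1 + t)⁻¹) t := by
  simpa using (((hasDerivAt_id t).const_add 1).log ht).const_mul c

theorem contDiffAt_inv_one_add_pow {n : WithTop ℕ∞} (N : ℕ) :
    ContDiffAt ℝ n (fun t : ℝ => (1 + t)⁻¹ ^ N) 0 := by
  fun_prop (disch := norm_num)

theorem iteratedDeriv_one_add_zpow_zero {𝕜 : Type*} [NontriviallyNormedField 𝕜] (m : ℤ)
    (l : ℕ) : iteratedDeriv l (fun t : 𝕜 => (1 + t) ^ m) 0 = (descPochhammer 𝕜 l).eval (m : 𝕜) := by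
  rw [iteratedDeriv_comp_const_add l (fun y : 𝕜 => y ^ m) 1, iteratedDeriv_eq_iterate]
  simp [iter_deriv_zpow, descPochhammer_eval_eq_prod_range]

theorem iteratedDeriv_inv_one_add_pow_mul_zero {f : ℝ → ℝ} {k : ℕ} (hf : ContDiffAt ℝ k f 0)
    (N : ℕ) :
    iteratedDeriv k (fun t => (1 + t)⁻¹ ^ N * f t) 0 =
      ∑ l ∈ range (k + 1), (k.choose l : ℝ) * (-1) ^ l *
        (descPochhammer ℝ l).eval ((N : ℝ) + l - 1) * iteratedDeriv (k - l) f 0 := by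
  have hzpow : (fun t : ℝ => (1 + t)⁻¹ ^ N) = fun t => (1 + t) ^ (-(N : ℤ)) := by
    ext t
    rw [zpow_neg, zpow_natCast, inv_pow]
  rw [iteratedDeriv_fun_mul (contDiffAt_inv_one_add_pow N) hf, hzpow]
  refine sum_congr rfl fun l _ => ?_
  rw [iteratedDeriv_one_add_zpow_zero, Int.cast_neg, Int.cast_natCast,
    descPochhammer_eval_neg_natCast]
  ring

theorem eqOn_iteratedDeriv_comp_mul_log_one_add {F : ℝ → ℝ} (hF : ContDiff ℝ ∞ F) (c : ℝ)
    (m : ℕ) :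
    Set.EqOn (iteratedDeriv m fun t => F (c * Real.log (1 + t)))
      (fun t => (1 + t)⁻¹ ^ m * ∑ n ∈ range (m + 1),
        (descPochhammer ℝ m).coeff n * (c ^ n * iteratedDeriv n F (c * Real.log (1 + t))))
      (Set.Ioi (-1)) := by
  refine eqOn_iteratedDeriv_of_hasDerivAt (Φ := fun m t => (1 + t)⁻¹ ^ m *
    ∑ n ∈ range (m + 1), (descPochhammer ℝ m).coeff n *
      (c ^ n * iteratedDeriv n F (c * Real.log (1 + t)))) isOpen_Ioi (fun t _ => by simp) ?_ m
    m.zero_le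
  intro m _ t ht
  have ht' : 1 + t ≠ 0 := by linarith [Set.mem_Ioi.1 ht]
  set ψ : ℕ → ℝ → ℝ := fun n s => c ^ n * iteratedDeriv n F (c * Real.log (1 + s))
  have hψ : ∀ n, HasDerivAt (ψ n) ((1 + t)⁻¹ * ψ (n + 1) t) t := fun n => by
    have hFn : HasDerivAt (iteratedDeriv n F) (iteratedDeriv (n + 1) F (c * Real.log (1 + t)))
        (c * Real.log (1 + t)) := by
      rw [iteratedDeriv_succ]
      exact ((hF.differentiable_iteratedDeriv n
        (by exact_mod_cast ENat.natCast_lt_top n)).differentiableAt).hasDerivAt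
    refine ((hFn.comp t (hasDerivAt_mul_log_one_add c ht')).const_mul (c ^ n)).congr_deriv ?_
    simp only [ψ]
    ring
  refine ((hasDerivAt_inv_one_add_pow m ht').mul (HasDerivAt.fun_sum fun n _ =>
    (hψ n).const_mul ((descPochhammer ℝ m).coeff n))).congr_deriv ?_
  rw [descPochhammer_succ_right, ← C_eq_natCast,
    sum_coeff_mul_X_sub_C (descPochhammer_natDegree ℝ m).le, mul_sum, mul_sum, mul_sum,
    ← sum_add_distrib]
  refine sum_congr rfl fun n _ => ?_
  simp only [ψ]
  ring

theorem iteratedDeriv_comp_mul_log_one_add_zero {F : ℝ → ℝ} (hF : ContDiff ℝ ∞ F) (c : ℝ)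
    (m : ℕ) :
    iteratedDeriv m (fun t => F (c * Real.log (1 + t))) 0 =
      ∑ n ∈ range (m + 1), (descPochhammer ℝ m).coeff n * (c ^ n * iteratedDeriv n F 0) := by
  simpa using eqOn_iteratedDeriv_comp_mul_log_one_add hF c m
    (show (0 : ℝ) ∈ Set.Ioi (-1) by norm_num)

/-- `1 / ((1 + t) ^ c + 1)`, the generating function of the Boole numbers `Blₙ(0; c)`. -/
noncomputable def booleGF (c t : ℝ) : ℝ := (Real.exp (c * Real.log (1 + t)) + 1)⁻¹

theorem contDiffAt_booleGF (c : ℝ) {t : ℝ} (ht : 1 + t ≠ 0) : ContDiffAt ℝ ∞ (booleGF c) t := by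
  have : ContDiffAt ℝ ∞ (fun s : ℝ => Real.log (1 + s)) t :=
    (Real.contDiffAt_log.2 ht).comp t (contDiffAt_const.add contDiffAt_id)
  exact ((contDiffAt_const.mul this).exp.add contDiffAt_const).inv (by positivity)

theorem hasDerivAt_booleGF (c : ℝ) {t : ℝ} (ht : 1 + t ≠ 0) :
    HasDerivAt (booleGF c) (-(c * (1 + t)⁻¹) * (booleGF c t - booleGF c t ^ 2)) t := by
  have hne : Real.exp (c * Real.log (1 + t)) + 1 ≠ 0 := by positivity
  refine (((hasDerivAt_mul_log_one_add c ht).exp.add_const 1).fun_inv hne).congr_deriv ?_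
  simp only [booleGF]
  field_simp
  ring

theorem iteratedDeriv_booleGF_pow_zero (c : ℝ) (i m : ℕ) :
    iteratedDeriv m (fun t => booleGF c t ^ i) 0 =
      ∑ n ∈ range (m + 1), (2 : ℝ) ^ (-(i : ℤ)) *
        iteratedDeriv n (fun x => (2 / (Real.exp x + 1)) ^ i) 0 * c ^ n *
          (descPochhammer ℝ m).coeff n := by
  have hscale : ∀ n, iteratedDeriv n (fun x => (Real.exp x + 1)⁻¹ ^ i) 0 =
      (2 : ℝ) ^ (-(i : ℤ)) * iteratedDeriv n (fun x => (2 / (Real.exp x + 1)) ^ i) 0 := fun n => by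
    rw [zpow_neg, zpow_natCast, ← iteratedDeriv_const_mul_field]
    congr 1
    ext x
    rw [div_eq_mul_inv, mul_pow, inv_mul_cancel_left₀ (by positivity)]
  refine (iteratedDeriv_comp_mul_log_one_add_zero (F := fun x => (Real.exp x + 1)⁻¹ ^ i)
    (((Real.contDiff_exp.add contDiff_const).inv fun x => by positivity).pow i) c m).trans
      (sum_congr rfl fun n _ => ?_)
  rw [hscale]
  ring

theorem sum_mul_pow_succ_of_recursion (c : ℝ) (a : ℕ → ℕ → ℝ) (N : ℕ)
    (h_first : a 0 (N + 1) = (N + c) * a 0 N)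
    (h_last : a (N + 1) (N + 1) = -((N + 1) * c) * a N N)
    (h_mid : ∀ j < N,
      a (j + 1) (N + 1) = -((j + 1) * c) * a j N + (N + (j + 2) * c) * a (j + 1) N)
    (x : ℝ) :
    ∑ j ∈ range (N + 2), a j (N + 1) * x ^ (j + 1) =
      N * ∑ j ∈ range (N + 1), a j N * x ^ (j + 1) +
        c * ∑ j ∈ range (N + 1), (j + 1) * a j N * (x ^ (j + 1) - x ^ (j + 2)) := by
  have hR : N * ∑ j ∈ range (N + 1), a j N * x ^ (j + 1) +
        c * ∑ j ∈ range (N + 1), (j + 1) * a j N * (x ^ (j + 1) - x ^ (j + 2)) =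
      ∑ j ∈ range (N + 1), (N + (j + 1) * c) * a j N * x ^ (j + 1) -
        ∑ j ∈ range (N + 1), c * (j + 1) * a j N * x ^ (j + 2) := by
    rw [mul_sum, mul_sum, ← sum_add_distrib, ← sum_sub_distrib]
    exact sum_congr rfl fun j _ => by ring
  have h_mid' : ∑ j ∈ range N, a (j + 1) (N + 1) * x ^ (j + 1 + 1) =
      ∑ j ∈ range N, (N + ((j + 1 : ℕ) + 1) * c) * a (j + 1) N * x ^ (j + 1 + 1) -
        ∑ j ∈ range N, c * (j + 1) * a j N * x ^ (j + 2) := by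
    rw [← sum_sub_distrib]
    refine sum_congr rfl fun j hj => ?_
    rw [h_mid j (mem_range.1 hj)]
    push_cast
    ring
  rw [hR, sum_range_succ' _ (N + 1), sum_range_succ _ N, h_mid',
    sum_range_succ' (fun j => (N + ((j : ℕ) + 1) * c) * a j N * x ^ (j + 1)),
    sum_range_succ (fun j => c * (j + 1) * a j N * x ^ (j + 2)), h_first, h_last]
  push_cast
  ring

theorem eqOn_iteratedDeriv_booleGF (c : ℝ) (a : ℕ → ℕ → ℝ) (ha01 : a 0 1 = 1)
    (ha11 : a 1 1 = -1)
    (haTop : ∀ N : ℕ, 1 ≤ N → a 0 (N + 1) = ((N : ℝ) + c) * a 0 N)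
    (haBot : ∀ N : ℕ, 1 ≤ N → a (N + 1) (N + 1) = -(((N : ℝ) + 1) * c) * a N N)
    (haMid : ∀ N : ℕ, 1 ≤ N → ∀ i : ℕ, 2 ≤ i → i ≤ N + 1 →
      a (i - 1) (N + 1) =
        -(((i : ℝ) - 1) * c) * a (i - 2) N + ((N : ℝ) + (i : ℝ) * c) * a (i - 1) N) :
    ∀ N ≥ 1, Set.EqOn (iteratedDeriv N (booleGF c))
      (fun t => (-1) ^ N * c *
        ((1 + t)⁻¹ ^ N * ∑ j ∈ range (N + 1), a j N * booleGF c t ^ (j + 1)))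
      (Set.Ioi (-1)) := by
  refine eqOn_iteratedDeriv_of_hasDerivAt (Φ := fun N t => (-1) ^ N * c *
    ((1 + t)⁻¹ ^ N * ∑ j ∈ range (N + 1), a j N * booleGF c t ^ (j + 1))) isOpen_Ioi ?_ ?_
  · intro t ht
    rw [iteratedDeriv_one, (hasDerivAt_booleGF c (by linarith [Set.mem_Ioi.1 ht])).deriv]
    simp [sum_range_succ, ha01, ha11]
    ring
  intro N hN t ht
  have ht' : 1 + t ≠ 0 := by linarith [Set.mem_Ioi.1 ht]
  have h_mid : ∀ j < N, a (j + 1) (N + 1) =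
      -((j + 1) * c) * a j N + (N + (j + 2) * c) * a (j + 1) N := fun j hj => by
    have := haMid N hN (j + 2) (by omega) (by omega)
    simp only [Nat.add_sub_cancel, show j + 2 - 1 = j + 1 by omega] at this
    rw [this]
    push_cast
    ring
  have h_chain : ∑ j ∈ range (N + 1), a j N * (((j + 1 : ℕ) : ℝ) * booleGF c t ^ (j + 1 - 1) *
        (-(c * (1 + t)⁻¹) * (booleGF c t - booleGF c t ^ 2))) =
      -(c * (1 + t)⁻¹) * ∑ j ∈ range (N + 1),
        (j + 1) * a j N * (booleGF c t ^ (j + 1) - booleGF c t ^ (j + 2)) := by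
    rw [mul_sum]
    refine sum_congr rfl fun j _ => ?_
    rw [Nat.add_sub_cancel]
    push_cast
    ring
  refine (((hasDerivAt_inv_one_add_pow N ht').mul (HasDerivAt.fun_sum fun j _ =>
    ((hasDerivAt_booleGF c ht').fun_pow (j + 1)).const_mul (a j N))).const_mul
      ((-1) ^ N * c)).congr_deriv ?_
  rw [h_chain,
    sum_mul_pow_succ_of_recursion c a N (haTop N hN) (by exact_mod_cast haBot N hN) h_mid]
  ring

theorem iteratedDeriv_booleGF_add_zero (c : ℝ) (a : ℕ → ℕ → ℝ) (ha01 : a 0 1 = 1)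
    (ha11 : a 1 1 = -1)
    (haTop : ∀ N : ℕ, 1 ≤ N → a 0 (N + 1) = ((N : ℝ) + c) * a 0 N)
    (haBot : ∀ N : ℕ, 1 ≤ N → a (N + 1) (N + 1) = -(((N : ℝ) + 1) * c) * a N N)
    (haMid : ∀ N : ℕ, 1 ≤ N → ∀ i : ℕ, 2 ≤ i → i ≤ N + 1 →
      a (i - 1) (N + 1) =
        -(((i : ℝ) - 1) * c) * a (i - 2) N + ((N : ℝ) + (i : ℝ) * c) * a (i - 1) N)
    {N : ℕ} (hN : 1 ≤ N) (k : ℕ) :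
    iteratedDeriv (k + N) (booleGF c) 0 =
      (-1) ^ N * c * ∑ j ∈ range (N + 1), a j N *
        ∑ l ∈ range (k + 1), (k.choose l : ℝ) * (-1) ^ l *
          (descPochhammer ℝ l).eval ((N : ℝ) + l - 1) *
            iteratedDeriv (k - l) (fun t => booleGF c t ^ (j + 1)) 0 := by
  have hsmooth : ∀ j, ContDiffAt ℝ k (fun t => booleGF c t ^ j) 0 := fun j =>
    ((contDiffAt_booleGF c (by norm_num)).pow j).of_le (by exact_mod_cast le_top)
  have hnear := (eqOn_iteratedDeriv_booleGF c a ha01 ha11 haTop haBot haMid N hN)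
    |>.eventuallyEq_of_mem (Ioi_mem_nhds (show (-1 : ℝ) < 0 by norm_num))
  have hsplit : (fun t => (1 + t)⁻¹ ^ N * ∑ j ∈ range (N + 1), a j N * booleGF c t ^ (j + 1)) =
      fun t => ∑ j ∈ range (N + 1), a j N * ((1 + t)⁻¹ ^ N * booleGF c t ^ (j + 1)) := by
    ext t
    rw [mul_sum]
    exact sum_congr rfl fun _ _ => by ring
  rw [iteratedDeriv_eq_iterate, Function.iterate_add_apply, ← iteratedDeriv_eq_iterate,
    ← iteratedDeriv_eq_iterate, hnear.iteratedDeriv_eq, iteratedDeriv_const_mul_field, hsplit,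
    iteratedDeriv_fun_sum fun j _ =>
      contDiffAt_const.mul ((contDiffAt_inv_one_add_pow N).mul (hsmooth (j + 1)))]
  exact congrArg _ <| sum_congr rfl fun j _ => by
    rw [iteratedDeriv_const_mul_field, iteratedDeriv_inv_one_add_pow_mul_zero (hsmooth _)]

theorem euler_stirling_boole_identity_general (lam : ℝ)
    (E : ℕ → ℝ)
    (hE : ∀ n : ℕ, iteratedDeriv n (fun t : ℝ => 2 / (Real.exp t + 1)) 0 = E n)
    (Er : ℕ → ℕ → ℝ)
    (hEr : ∀ i : ℕ, 1 ≤ i → ∀ n : ℕ,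
      iteratedDeriv n (fun t : ℝ => (2 / (Real.exp t + 1)) ^ i) 0 = Er i n)
    (S1 : ℕ → ℕ → ℝ)
    (hS1 : ∀ (n : ℕ) (x : ℝ),
      (descPochhammer ℝ n).eval x = ∑ k ∈ Finset.range (n + 1), S1 n k * x ^ k)
    (a : ℕ → ℕ → ℝ)
    (ha01 : a 0 1 = 1) (ha11 : a 1 1 = -1)
    (haTop : ∀ N : ℕ, 1 ≤ N → a 0 (N + 1) = ((N : ℝ) + lam) * a 0 N)
    (haBot : ∀ N : ℕ, 1 ≤ N →
      a (N + 1) (N + 1) = -(((N : ℝ) + 1) * lam) * a N N)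
    (haMid : ∀ N : ℕ, 1 ≤ N → ∀ i : ℕ, 2 ≤ i → i ≤ N + 1 →
      a (i - 1) (N + 1) =
        -(((i : ℝ) - 1) * lam) * a (i - 2) N + ((N : ℝ) + (i : ℝ) * lam) * a (i - 1) N)
    (N : ℕ) (hN : 1 ≤ N) (k : ℕ) :
    (1 / 2 : ℝ) * ∑ n ∈ Finset.range (k + N + 1), E n * lam ^ n * S1 (k + N) n =
      (-1 : ℝ) ^ N * lam *
        ∑ i ∈ Finset.Icc 1 (N + 1), a (i - 1) N *
          ∑ l ∈ Finset.range (k + 1),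
            (k.choose l : ℝ) * (-1 : ℝ) ^ l *
              (descPochhammer ℝ l).eval ((N : ℝ) + (l : ℝ) - 1) *
              ∑ n ∈ Finset.range (k - l + 1),
                (2 : ℝ) ^ (-(i : ℤ)) * Er i n * lam ^ n * S1 (k - l) n := by
  have hS : ∀ m n, n ∈ range (m + 1) → (descPochhammer ℝ m).coeff n = S1 m n := fun m n hn =>
    Polynomial.coeff_eq_of_eval_eq_sum (hS1 m) (Nat.le_of_lt_succ (mem_range.1 hn))
  have hpow : ∀ i : ℕ, 1 ≤ i → ∀ m, iteratedDeriv m (fun t => booleGF lam t ^ i) 0 =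
      ∑ n ∈ range (m + 1), (2 : ℝ) ^ (-(i : ℤ)) * Er i n * lam ^ n * S1 m n := fun i hi m => by
    rw [iteratedDeriv_booleGF_pow_zero]
    exact sum_congr rfl fun n hn => by rw [hEr i hi, hS m n hn]
  calc (1 / 2 : ℝ) * ∑ n ∈ range (k + N + 1), E n * lam ^ n * S1 (k + N) n
      = iteratedDeriv (k + N) (booleGF lam) 0 := by
        rw [← funext fun t => pow_one (booleGF lam t), iteratedDeriv_booleGF_pow_zero, mul_sum]
        exact sum_congr rfl fun n hn => by
          simp only [pow_one, hE, hS _ n hn, Nat.cast_one, zpow_neg_one]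
          ring
    _ = _ := by
        rw [iteratedDeriv_booleGF_add_zero lam a ha01 ha11 haTop haBot haMid hN,
          ← Ico_add_one_right_eq_Icc, sum_Ico_eq_sum_range, Nat.add_sub_cancel]
        refine congrArg _ <| sum_congr rfl fun j _ => ?_
        rw [add_comm 1 j, Nat.add_sub_cancel]
        exact congrArg _ <| sum_congr rfl fun l _ => by rw [hpow (j + 1) (by omega)]

/-- (Theorem 4 of the paper.)  Let `λ ≠ 0`.  The Euler
numbers `E n` are defined by `2/(eᵗ+1) = Σ E n · tⁿ/n!`, the higher-order
Euler numbers `Er i n` by `(2/(eᵗ+1))ⁱ = Σ Er i n · tⁿ/n!` for `i ≥ 1`, the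
signed Stirling numbers of the first kind `S1 n k` by
`x(x-1)⋯(x-n+1) = Σ_{k=0}^{n} S1 n k · xᵏ`, and `a_k(N;λ)` are the
recursively defined coefficients.  Then for all `N ≥ 1` and `k ≥ 0`:
`(1/2)·Σ_{n=0}^{k+N} E n λⁿ S1 (k+N) n
  = (-1)^N λ Σ_{i=1}^{N+1} a_{i-1}(N;λ)
      Σ_{l=0}^{k} C(k,l) (-1)ˡ (N+l-1)_l Σ_{n=0}^{k-l} 2⁻ⁱ Er i n λⁿ S1 (k-l) n`,
where `(N+l-1)_l` is the falling factorial (`descPochhammer`). -/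
theorem euler_stirling_boole_identity (lam : ℝ) (hlam : lam ≠ 0)
    (E : ℕ → ℝ)
    (hE : ∀ n : ℕ, iteratedDeriv n (fun t : ℝ => 2 / (Real.exp t + 1)) 0 = E n)
    (Er : ℕ → ℕ → ℝ)
    (hEr : ∀ i : ℕ, 1 ≤ i → ∀ n : ℕ,
      iteratedDeriv n (fun t : ℝ => (2 / (Real.exp t + 1)) ^ i) 0 = Er i n)
    (S1 : ℕ → ℕ → ℝ)
    (hS1 : ∀ (n : ℕ) (x : ℝ),
      (descPochhammer ℝ n).eval x = ∑ k ∈ Finset.range (n + 1), S1 n k * x ^ k)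
    (a : ℕ → ℕ → ℝ)
    (ha00 : a 0 0 = 1 / lam) (ha01 : a 0 1 = 1) (ha11 : a 1 1 = -1)
    (haTop : ∀ N : ℕ, 1 ≤ N → a 0 (N + 1) = ((N : ℝ) + lam) * a 0 N)
    (haBot : ∀ N : ℕ, 1 ≤ N →
      a (N + 1) (N + 1) = -(((N : ℝ) + 1) * lam) * a N N)
    (haMid : ∀ N : ℕ, 1 ≤ N → ∀ i : ℕ, 2 ≤ i → i ≤ N + 1 →
      a (i - 1) (N + 1) =
        -(((i : ℝ) - 1) * lam) * a (i - 2) N + ((N : ℝ) + (i : ℝ) * lam) * a (i - 1) N)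
    (N : ℕ) (hN : 1 ≤ N) (k : ℕ) :
    (1 / 2 : ℝ) * ∑ n ∈ Finset.range (k + N + 1), E n * lam ^ n * S1 (k + N) n =
      (-1 : ℝ) ^ N * lam *
        ∑ i ∈ Finset.Icc 1 (N + 1), a (i - 1) N *
          ∑ l ∈ Finset.range (k + 1),
            (k.choose l : ℝ) * (-1 : ℝ) ^ l *
              (descPochhammer ℝ l).eval ((N : ℝ) + (l : ℝ) - 1) *
              ∑ n ∈ Finset.range (k - l + 1),
                (2 : ℝ) ^ (-(i : ℤ)) * Er i n * lam ^ n * S1 (k - l) n :=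
  euler_stirling_boole_identity_general lam E hE Er hEr S1 hS1 a ha01 ha11 haTop haBot haMid N hN k
end
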